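/- (Lemma 2.3) Suppose conditions A1–A5 hold both for (S̄, η̄¹) and for (T̄, η̄²). Then I(S̄) = I(T̄) = I₁, and the set of δ < ω₁ at which η̄¹ and η̄² essentially differ — namely {δ ∈ dom(η̄¹) ∖ dom(η̄²) } ∪ {δ ∈ dom(η̄²) ∖ dom(η̄¹)} ∪ {δ ∈ dom(η̄¹) ∩ dom(η̄²) : [η¹_δ] =* [η²_δ] fails} — belongs to I₁. -/

import Mathlib

open Set

/-- ω₁, the first uncountable ordinal. -/
noncomputable def omegaOne : Ordinal := (Cardinal.aleph 1).ord

/-- ω₂, the second uncountable ordinal. -/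
noncomputable def omegaTwo : Ordinal := (Cardinal.aleph 2).ord

/-- The set of countable ordinals, i.e. ω₁ viewed as a set of ordinals. -/
def omegaOneSet : Set Ordinal := {o | o < omegaOne}

/-- `A ⊆* B` iff `A \ B` is finite. -/
def AlmostSubset (A B : Set Ordinal) : Prop := (A \ B).Finite

/-- `A =* B` iff `A ⊆* B` and `B ⊆* A`. -/
def AlmostEq (A B : Set Ordinal) : Prop := AlmostSubset A B ∧ AlmostSubset B A

/-- A club subset of ω₁: a set of countable ordinals, unbounded in ω₁ and
closed (every nonzero δ < ω₁ which is a limit of members is a member). -/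
def IsClubOmegaOne (C : Set Ordinal) : Prop :=
  C ⊆ omegaOneSet ∧
  (∀ a < omegaOne, ∃ b ∈ C, a < b) ∧
  (∀ δ, δ ≠ 0 → δ < omegaOne → (∀ a < δ, ∃ b ∈ C, a < b ∧ b < δ) → δ ∈ C)

/-- A stationary subset of ω₁: one meeting every club. -/
def Stationary (S : Set Ordinal) : Prop := ∀ C, IsClubOmegaOne C → (S ∩ C).Nonempty

/-- A ladder system: for each δ in the domain (a set of countable limit ordinals),
a strictly increasing ω-sequence cofinal in δ. -/
structure Ladder where
  dom : Set Ordinal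
  toFun : Ordinal → ℕ → Ordinal
  dom_lt : ∀ δ ∈ dom, δ < omegaOne
  mono : ∀ δ ∈ dom, StrictMono (toFun δ)
  lt : ∀ δ ∈ dom, ∀ n, toFun δ n < δ
  cofinal : ∀ δ ∈ dom, ∀ a < δ, ∃ n, a < toFun δ n

/-- `[η_δ]`, the range of the ladder at δ. -/
def Ladder.lad (η : Ladder) (δ : Ordinal) : Set Ordinal := Set.range (η.toFun δ)

/-- The restriction `η̄↾A`, with domain `dom(η̄) ∩ A`. -/
def Ladder.restrict (η : Ladder) (A : Set Ordinal) : Ladder where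
  dom := η.dom ∩ A
  toFun := η.toFun
  dom_lt := fun δ h => η.dom_lt δ h.1
  mono := fun δ h => η.mono δ h.1
  lt := fun δ h => η.lt δ h.1
  cofinal := fun δ h => η.cofinal δ h.1

/-- η̄ is club-guessing iff every club C has some δ ∈ dom(η̄) with `[η_δ] ⊆* C`. -/
def ClubGuessing (η : Ladder) : Prop :=
  ∀ C, IsClubOmegaOne C → ∃ δ ∈ η.dom, AlmostSubset (η.lad δ) C

/-- η̄ is strongly club-guessing iff for every club C there is a club D with
`[η_δ] ⊆* C` for all δ ∈ D ∩ dom(η̄). -/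
def StronglyGuessing (η : Ladder) : Prop :=
  ∀ C, IsClubOmegaOne C → ∃ D, IsClubOmegaOne D ∧ ∀ δ ∈ D ∩ η.dom, AlmostSubset (η.lad δ) C

/-- A club C avoids η̄ iff `[η_δ] ∩ C` is finite for every δ ∈ dom(η̄) outside
some non-stationary set. -/
def Avoids (C : Set Ordinal) (η : Ladder) : Prop :=
  IsClubOmegaOne C ∧ ∃ N : Set Ordinal, ¬ Stationary N ∧
    ∀ δ ∈ η.dom, δ ∉ N → (η.lad δ ∩ C).Finite

/-- η̄ is avoidable iff some club avoids it. -/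
def Avoidable (η : Ladder) : Prop := ∃ C, Avoids C η

/-- A set S ⊆ ω₁ is avoidable iff every ladder system over S is avoidable. -/
def AvoidableSet (S : Set Ordinal) : Prop := ∀ η : Ladder, η.dom ⊆ S → Avoidable η

/-- Two ladders are almost disjoint iff for some club C, `[η_δ] ∩ [μ_δ]` is finite
for every δ ∈ C ∩ dom(η̄) ∩ dom(μ̄). -/
def AlmostDisjoint (η μ : Ladder) : Prop :=
  ∃ C, IsClubOmegaOne C ∧ ∀ δ ∈ C ∩ (η.dom ∩ μ.dom), (η.lad δ ∩ μ.lad δ).Finite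

/-- `η̄ ⊴ μ̄` : η̄ is a subladder of μ̄. -/
def Subladder (η μ : Ladder) : Prop :=
  ∃ C, IsClubOmegaOne C ∧ C ∩ η.dom ⊆ μ.dom ∧
    ∀ δ ∈ C ∩ η.dom, AlmostSubset (η.lad δ) (μ.lad δ)

/-- η̄ is maximal for X iff dom(η̄) ⊆ X, η̄ is strongly club-guessing, and every
ladder system over X almost disjoint from η̄ is avoidable. -/
def LadderMaximalFor (η : Ladder) (X : Set Ordinal) : Prop :=
  η.dom ⊆ X ∧ StronglyGuessing η ∧
    ∀ μ : Ladder, μ.dom ⊆ X → AlmostDisjoint μ η → Avoidable μ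

/-- The diagonal union `∇_ξ A_ξ = {α < ω₁ : ∃ ξ < α, α ∈ A_ξ}`. -/
def diagUnion (A : Ordinal → Set Ordinal) : Set Ordinal :=
  {α | α < omegaOne ∧ ∃ ξ < α, α ∈ A ξ}

/-- H is S̄-small iff the set of i < ω₂ with H ∩ S_i stationary has size ≤ ℵ₁. -/
def SSmall (S : Ordinal → Set Ordinal) (H : Set Ordinal) : Prop :=
  Cardinal.mk {i : Ordinal // i < omegaTwo ∧ Stationary (H ∩ S i)} ≤
    Cardinal.lift.{1,0} (Cardinal.aleph 1 : Cardinal.{0})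

/-- Conditions A1–A5 for (S̄, η̄), with χ the family of maximal ladders from A3. -/
def CondA (S : Ordinal → Set Ordinal) (η : Ladder) (χ : Ordinal → Ladder) : Prop :=
  (∀ i < omegaTwo, S i ⊆ omegaOneSet ∧ Stationary (S i)) ∧
  (∀ i < omegaTwo, ∀ j < omegaTwo, i ≠ j → ¬ Stationary (S i ∩ S j)) ∧
  -- A1
  (∀ i < omegaTwo, S i ⊆ η.dom) ∧
  -- A2
  (∀ μ : Ladder, AlmostDisjoint μ η → Avoidable μ) ∧
  -- A3
  (∀ i < omegaTwo, (χ i).dom = S i ∧ LadderMaximalFor (χ i) (S i)) ∧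
  -- A4
  (∀ X : Set Ordinal, X ⊆ omegaOneSet →
      (∀ i < omegaTwo, ¬ Stationary (X ∩ S i)) → AvoidableSet X) ∧
  -- A5
  (∀ X : Set Ordinal, X ⊆ omegaOneSet → ¬ SSmall S X →
      ∀ ρ : Ladder, ρ.dom = X → Subladder ρ η →
        ∃ i, i < omegaTwo ∧ S i ⊆ X ∧ Subladder (χ i) ρ)

-- ### basics

lemma omegaOne_isLimit : Order.IsSuccLimit omegaOne :=
  Cardinal.isSuccLimit_ord (Cardinal.aleph0_le_aleph 1)

lemma omegaOne_pos : (0 : Ordinal) < omegaOne := omegaOne_isLimit.pos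

lemma isClub_omegaOneSet : IsClubOmegaOne omegaOneSet := by
  refine ⟨fun x hx => hx, fun a ha => ⟨Order.succ a, omegaOne_isLimit.succ_lt ha, Order.lt_succ a⟩,
    fun δ _ hδ _ => hδ⟩

lemma countable_Iio {c : Ordinal} (hc : c < omegaOne) : Countable (Iio c) := by
  rw [← Cardinal.mk_le_aleph0_iff, Ordinal.mk_Iio_ordinal]
  have h1 : c.card < Cardinal.aleph 1 := Cardinal.lt_ord.mp hc
  rw [← Cardinal.succ_aleph0, Order.lt_succ_iff] at h1
  simpa using Cardinal.lift_le.mpr h1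

/-- Key sequence lemma: given countably many clubs, above any `a < ω₁` there is a `δ`
which is a nonzero limit of points of each club. -/
lemma exists_approx_point (F : ℕ → Set Ordinal) (hF : ∀ n, IsClubOmegaOne (F n))
    {a : Ordinal} (ha : a < omegaOne) :
    ∃ δ, a < δ ∧ δ < omegaOne ∧ δ ≠ 0 ∧ ∀ n, ∀ b < δ, ∃ c ∈ F n, b < c ∧ c < δ := by
  classical
  have pick : ∀ n : ℕ, ∀ c : Ordinal, c < omegaOne →
      ∃ b, b ∈ F n ∧ c < b ∧ b < omegaOne := by
    intro n c hc
    obtain ⟨b, hb, hcb⟩ := (hF n).2.1 c hc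
    exact ⟨b, hb, hcb, (hF n).1 hb⟩
  let step : ℕ → {o : Ordinal // o < omegaOne} → {o : Ordinal // o < omegaOne} :=
    fun n c => ⟨Classical.choose (pick n c.1 c.2),
      (Classical.choose_spec (pick n c.1 c.2)).2.2⟩
  let x : ℕ → {o : Ordinal // o < omegaOne} :=
    fun k => Nat.rec ⟨a, ha⟩ (fun k xk => step (Nat.unpair k).1 xk) k
  have hxsucc : ∀ k, (x k).1 < (x (k+1)).1 := by
    intro k
    exact (Classical.choose_spec (pick (Nat.unpair k).1 (x k).1 (x k).2)).2.1
  have hxmono : StrictMono (fun k => (x k).1) := strictMono_nat_of_lt_succ hxsucc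
  have hxmem : ∀ k, (x (k+1)).1 ∈ F (Nat.unpair k).1 := by
    intro k
    exact (Classical.choose_spec (pick (Nat.unpair k).1 (x k).1 (x k).2)).1
  set δ := iSup (fun k => (x k).1) with hδ
  have hlt : ∀ k, (x k).1 < δ := by
    intro k
    exact lt_of_lt_of_le (hxsucc k) (Ordinal.le_iSup (fun k => (x k).1) (k+1))
  have hδω : δ < omegaOne := by
    refine Cardinal.iSup_lt_ord_lift_of_isRegular Cardinal.isRegular_aleph_one ?_ (fun k => (x k).2)
    rw [Cardinal.mk_nat, Cardinal.lift_aleph0]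
    exact Cardinal.aleph0_lt_aleph_one
  have haδ : a < δ := lt_of_lt_of_le (hxsucc 0) (Ordinal.le_iSup _ 1)
  refine ⟨δ, haδ, hδω, ?_, ?_⟩
  · exact fun h => (not_lt_of_ge (zero_le (a := a))) (h ▸ haδ)
  · intro n b hb
    obtain ⟨k, hk⟩ := Ordinal.lt_iSup_iff.mp hb
    refine ⟨(x (Nat.pair n k + 1)).1, ?_, ?_, hlt (Nat.pair n k + 1)⟩
    · have := hxmem (Nat.pair n k)
      rwa [Nat.unpair_pair] at this
    · calc b < (x k).1 := hk
        _ ≤ (x (Nat.pair n k)).1 := hxmono.monotone (Nat.right_le_pair n k)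
        _ < _ := hxsucc _

lemma isClub_iInter_nat (F : ℕ → Set Ordinal) (hF : ∀ n, IsClubOmegaOne (F n)) :
    IsClubOmegaOne (⋂ n, F n) := by
  refine ⟨fun x hx => (hF 0).1 (mem_iInter.mp hx 0), ?_, ?_⟩
  · intro a ha
    obtain ⟨δ, haδ, hδω, hδ0, happrox⟩ := exists_approx_point F hF ha
    refine ⟨δ, mem_iInter.mpr (fun n => (hF n).2.2 δ hδ0 hδω (happrox n)), haδ⟩
  · intro δ hδ0 hδω happrox
    refine mem_iInter.mpr (fun n => (hF n).2.2 δ hδ0 hδω ?_)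
    intro a ha
    obtain ⟨b, hb, h1, h2⟩ := happrox a ha
    exact ⟨b, mem_iInter.mp hb n, h1, h2⟩

lemma isClub_inter {C D : Set Ordinal} (hC : IsClubOmegaOne C) (hD : IsClubOmegaOne D) :
    IsClubOmegaOne (C ∩ D) := by
  classical
  have : C ∩ D = ⋂ n : ℕ, (if n = 0 then C else D) := by
    ext x
    simp only [mem_inter_iff, mem_iInter]
    constructor
    · rintro ⟨h1, h2⟩ n; split <;> assumption
    · intro h; exact ⟨by simpa using h 0, by simpa using h 1⟩
  rw [this]
  refine isClub_iInter_nat _ (fun n => ?_)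
  split <;> assumption

lemma isClub_iInter_countable {ι : Type*} [Nonempty ι] [Countable ι]
    (F : ι → Set Ordinal) (hF : ∀ i, IsClubOmegaOne (F i)) : IsClubOmegaOne (⋂ i, F i) := by
  obtain ⟨u, hu⟩ := exists_surjective_nat ι
  have : ⋂ i, F i = ⋂ n, F (u n) := by
    apply Subset.antisymm
    · exact fun x hx => mem_iInter.mpr (fun n => mem_iInter.mp hx (u n))
    · intro x hx
      refine mem_iInter.mpr (fun i => ?_)
      obtain ⟨n, rfl⟩ := hu i
      exact mem_iInter.mp hx n
  rw [this]
  exact isClub_iInter_nat _ (fun n => hF (u n))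

lemma isClub_above {a : Ordinal} (ha : a < omegaOne) :
    IsClubOmegaOne {x | a < x ∧ x < omegaOne} := by
  refine ⟨fun x hx => hx.2, ?_, ?_⟩
  · intro b hb
    refine ⟨Order.succ (max a b), ⟨?_, ?_⟩, ?_⟩
    · exact lt_of_le_of_lt (le_max_left a b) (Order.lt_succ _)
    · exact omegaOne_isLimit.succ_lt (max_lt ha hb)
    · exact lt_of_le_of_lt (le_max_right a b) (Order.lt_succ _)
  · intro δ hδ0 hδω happrox
    obtain ⟨b, hb, h1, h2⟩ := happrox 0 (pos_iff_ne_zero.mpr hδ0)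
    exact ⟨lt_trans hb.1 h2, hδω⟩

/-- The diagonal intersection of an `Ordinal`-indexed family of clubs. -/
def diagInter (F : Ordinal → Set Ordinal) : Set Ordinal :=
  {δ | δ < omegaOne ∧ ∀ α < δ, δ ∈ F α}

lemma isClub_diagInter (F : Ordinal → Set Ordinal) (hF : ∀ α, IsClubOmegaOne (F α)) :
    IsClubOmegaOne (diagInter F) := by
  refine ⟨fun x hx => hx.1, ?_, ?_⟩
  · intro a ha
    -- build an increasing ω-sequence
    have step : ∀ c : {o : Ordinal // 0 < o ∧ o < omegaOne},
        ∃ b, (b ∈ ⋂ α : Iio c.1, F α) ∧ c.1 < b ∧ b < omegaOne := by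
      rintro ⟨c, hc0, hcω⟩
      haveI : Nonempty (Iio c) := ⟨⟨0, hc0⟩⟩
      haveI := countable_Iio hcω
      have hclub : IsClubOmegaOne ((⋂ α : Iio c, F α) ∩ {x | c < x ∧ x < omegaOne}) :=
        isClub_inter (isClub_iInter_countable _ (fun i => hF i.1)) (isClub_above hcω)
      obtain ⟨b, hb, _⟩ := hclub.2.1 c hcω
      exact ⟨b, hb.1, hb.2.1, hb.2.2⟩
    let next : {o : Ordinal // 0 < o ∧ o < omegaOne} → {o : Ordinal // 0 < o ∧ o < omegaOne} :=
      fun c => ⟨Classical.choose (step c),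
        lt_trans c.2.1 (Classical.choose_spec (step c)).2.1,
        (Classical.choose_spec (step c)).2.2⟩
    let x : ℕ → {o : Ordinal // 0 < o ∧ o < omegaOne} :=
      fun k => Nat.rec ⟨Order.succ a, Order.bot_lt_succ a, omegaOne_isLimit.succ_lt ha⟩
        (fun _ xk => next xk) k
    have hxsucc : ∀ k, (x k).1 < (x (k+1)).1 := fun k => (Classical.choose_spec (step (x k))).2.1
    have hxmono : StrictMono (fun k => (x k).1) := strictMono_nat_of_lt_succ hxsucc
    have hxmem : ∀ k, (x (k+1)).1 ∈ ⋂ α : Iio (x k).1, F α :=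
      fun k => (Classical.choose_spec (step (x k))).1
    set δ := iSup (fun k => (x k).1) with hδdef
    have hlt : ∀ k, (x k).1 < δ := fun k => lt_of_lt_of_le (hxsucc k) (Ordinal.le_iSup (fun k => (x k).1) (k+1))
    have hδω : δ < omegaOne := by
      refine Cardinal.iSup_lt_ord_lift_of_isRegular Cardinal.isRegular_aleph_one ?_
        (fun k => (x k).2.2)
      rw [Cardinal.mk_nat, Cardinal.lift_aleph0]
      exact Cardinal.aleph0_lt_aleph_one
    have haδ : a < δ := lt_of_lt_of_le (Order.lt_succ a) (le_of_lt (hlt 0))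
    refine ⟨δ, ⟨hδω, ?_⟩, haδ⟩
    intro α hα
    obtain ⟨k₀, hk₀⟩ := Ordinal.lt_iSup_iff.mp hα
    refine (hF α).2.2 δ (fun h => (not_lt_of_ge (zero_le (a := a))) (h ▸ haδ)) hδω ?_
    intro b hb
    obtain ⟨m₀, hm₀⟩ := Ordinal.lt_iSup_iff.mp hb
    set j := max k₀ m₀
    have hαj : α < (x j).1 := lt_of_lt_of_le hk₀ (hxmono.monotone (le_max_left _ _))
    have hbj : b < (x j).1 := lt_of_lt_of_le hm₀ (hxmono.monotone (le_max_right _ _))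
    refine ⟨(x (j+1)).1, ?_, lt_trans hbj (hxsucc j), hlt (j+1)⟩
    exact mem_iInter.mp (hxmem j) ⟨α, hαj⟩
  · intro δ hδ0 hδω happrox
    refine ⟨hδω, fun α hα => ?_⟩
    refine (hF α).2.2 δ hδ0 hδω ?_
    intro b hb
    obtain ⟨c, hc, h1, h2⟩ := happrox (max α b) (max_lt hα hb)
    exact ⟨c, hc.2 α (lt_of_le_of_lt (le_max_left _ _) h1),
      lt_of_le_of_lt (le_max_right _ _) h1, h2⟩

-- ### nonstationary sets

lemma stat_mono {A B : Set Ordinal} (h : A ⊆ B) (hA : Stationary A) : Stationary B :=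
  fun C hC => (hA C hC).imp (fun x hx => ⟨h hx.1, hx.2⟩)

lemma ns_mono {A B : Set Ordinal} (h : A ⊆ B) (hB : ¬ Stationary B) : ¬ Stationary A :=
  fun hA => hB (stat_mono h hA)

lemma not_stationary_iff {N : Set Ordinal} :
    ¬ Stationary N ↔ ∃ C, IsClubOmegaOne C ∧ N ∩ C = ∅ := by
  unfold Stationary
  push_neg
  simp only [not_nonempty_iff_eq_empty]

lemma ns_union {A B : Set Ordinal} (hA : ¬ Stationary A) (hB : ¬ Stationary B) :
    ¬ Stationary (A ∪ B) := by
  obtain ⟨C, hC, hCA⟩ := not_stationary_iff.mp hA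
  obtain ⟨D, hD, hDB⟩ := not_stationary_iff.mp hB
  refine not_stationary_iff.mpr ⟨C ∩ D, isClub_inter hC hD, ?_⟩
  ext x
  simp only [mem_inter_iff, mem_union, mem_empty_iff_false, iff_false]
  rintro ⟨h1 | h1, h2, h3⟩
  · exact (eq_empty_iff_forall_notMem.mp hCA x) ⟨h1, h2⟩
  · exact (eq_empty_iff_forall_notMem.mp hDB x) ⟨h1, h3⟩

lemma stat_union_elim {A B : Set Ordinal} (h : Stationary (A ∪ B)) :
    Stationary A ∨ Stationary B := by
  by_contra hc
  push_neg at hc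
  exact ns_union hc.1 hc.2 h

lemma ns_bounded {a : Ordinal} (ha : a < omegaOne) {A : Set Ordinal}
    (h : ∀ x ∈ A, x ≤ a) : ¬ Stationary A := by
  refine not_stationary_iff.mpr ⟨{x | a < x ∧ x < omegaOne}, isClub_above ha, ?_⟩
  ext x
  simp only [mem_inter_iff, mem_empty_iff_false, iff_false]
  rintro ⟨hx, hax, _⟩
  exact absurd (h x hx) (not_le.mpr hax)

lemma ns_diagUnion {N : Ordinal → Set Ordinal} (hN : ∀ α, ¬ Stationary (N α)) :
    ¬ Stationary {δ | ∃ α < δ, δ ∈ N α} := by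
  classical
  have hC : ∀ α, ∃ C, IsClubOmegaOne C ∧ N α ∩ C = ∅ := fun α => not_stationary_iff.mp (hN α)
  choose C hCclub hCdisj using hC
  refine not_stationary_iff.mpr ⟨diagInter C, isClub_diagInter C hCclub, ?_⟩
  ext x
  simp only [mem_inter_iff, mem_empty_iff_false, iff_false]
  rintro ⟨⟨α, hα, hxN⟩, _, hdiag⟩
  exact (eq_empty_iff_forall_notMem.mp (hCdisj α) x) ⟨hxN, hdiag α hα⟩

lemma stat_inter_club {A C : Set Ordinal} (hA : Stationary A) (hC : IsClubOmegaOne C) :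
    Stationary (A ∩ C) := by
  intro D hD
  obtain ⟨x, hx⟩ := hA (C ∩ D) (isClub_inter hC hD)
  exact ⟨x, ⟨hx.1, hx.2.1⟩, hx.2.2⟩

lemma stat_avoid {A N : Set Ordinal} (hA : Stationary A) (hN : ¬ Stationary N)
    {C : Set Ordinal} (hC : IsClubOmegaOne C) : ∃ δ ∈ A ∩ C, δ ∉ N := by
  obtain ⟨C', hC', hdisj⟩ := not_stationary_iff.mp hN
  obtain ⟨δ, hδ⟩ := hA (C ∩ C') (isClub_inter hC hC')
  exact ⟨δ, ⟨hδ.1, hδ.2.1⟩, fun h => (eq_empty_iff_forall_notMem.mp hdisj δ) ⟨h, hδ.2.2⟩⟩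

-- ### ladder lemmas

lemma Ladder.lad_infinite (η : Ladder) {δ : Ordinal} (hδ : δ ∈ η.dom) :
    (η.lad δ).Infinite :=
  Set.infinite_range_of_injective (η.mono δ hδ).injective

lemma Ladder.restrict_lad (η : Ladder) (A : Set Ordinal) (δ : Ordinal) :
    (η.restrict A).lad δ = η.lad δ := rfl

/-- Only finitely many points of a ladder lie below any `a < δ`. -/
lemma Ladder.finite_below (η : Ladder) {δ : Ordinal} (hδ : δ ∈ η.dom)
    {a : Ordinal} (ha : a < δ) : ({x ∈ η.lad δ | x ≤ a}).Finite := by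
  obtain ⟨n, hn⟩ := η.cofinal δ hδ a ha
  have hsub : {x ∈ η.lad δ | x ≤ a} ⊆ (η.toFun δ) '' (Iio n) := by
    rintro x ⟨⟨m, rfl⟩, hxa⟩
    refine ⟨m, ?_, rfl⟩
    by_contra hm
    exact absurd (le_trans ((η.mono δ hδ).monotone (not_lt.mp hm)) hxa) (not_le.mpr hn)
  exact Finite.subset ((finite_Iio n).image _) hsub

lemma Ladder.cofinal_subset (η : Ladder) {δ : Ordinal} (hδ : δ ∈ η.dom)
    {Y : Set Ordinal} (hY : Y ⊆ η.lad δ) (hinf : Y.Infinite)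
    {a : Ordinal} (ha : a < δ) : ∃ y ∈ Y, a < y := by
  by_contra h
  push_neg at h
  exact hinf (Finite.subset (η.finite_below hδ ha) (fun y hy => ⟨hY hy, h y hy⟩))

/-- Sub-ladder running through a prescribed infinite subset of each rung. -/
noncomputable def Ladder.sub (η : Ladder) (D : Set Ordinal) (Y : Ordinal → Set Ordinal)
    (hD : D ⊆ η.dom) (hY : ∀ δ ∈ D, Y δ ⊆ η.lad δ) (hinf : ∀ δ ∈ D, (Y δ).Infinite) :
    Ladder where
  dom := D
  toFun := fun δ n => η.toFun δ (Nat.nth (fun k => η.toFun δ k ∈ Y δ) n)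
  dom_lt := fun δ h => η.dom_lt δ (hD h)
  mono := by
    intro δ h a b hab
    have hp : (setOf (fun k => η.toFun δ k ∈ Y δ)).Infinite :=
      (hinf δ h).preimage (hY δ h)
    exact η.mono δ (hD h) (Nat.nth_strictMono hp hab)
  lt := fun δ h n => η.lt δ (hD h) _
  cofinal := by
    intro δ h a ha
    have hp : (setOf (fun k => η.toFun δ k ∈ Y δ)).Infinite :=
      (hinf δ h).preimage (hY δ h)
    obtain ⟨y, hyY, hay⟩ := η.cofinal_subset (hD h) (hY δ h) (hinf δ h) ha
    obtain ⟨k, rfl⟩ : ∃ k, η.toFun δ k = y := by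
      obtain ⟨k, rfl⟩ := hY δ h hyY
      exact ⟨k, rfl⟩
    obtain ⟨n, hn⟩ : ∃ n, Nat.nth (fun k => η.toFun δ k ∈ Y δ) n = k := by
      have := Nat.range_nth_of_infinite hp
      have hk : k ∈ setOf (fun k => η.toFun δ k ∈ Y δ) := hyY
      exact (Set.ext_iff.mp this k).mpr hk
    exact ⟨n, by show a < η.toFun δ (Nat.nth (fun k => η.toFun δ k ∈ Y δ) n); rw [hn]; exact hay⟩

lemma Ladder.sub_lad (η : Ladder) (D : Set Ordinal) (Y : Ordinal → Set Ordinal)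
    (hD : D ⊆ η.dom) (hY : ∀ δ ∈ D, Y δ ⊆ η.lad δ) (hinf : ∀ δ ∈ D, (Y δ).Infinite)
    {δ : Ordinal} (hδ : δ ∈ D) : (η.sub D Y hD hY hinf).lad δ = Y δ := by
  have hp : (setOf (fun k => η.toFun δ k ∈ Y δ)).Infinite :=
    (hinf δ hδ).preimage (hY δ hδ)
  show Set.range ((η.toFun δ) ∘ (Nat.nth (fun k => η.toFun δ k ∈ Y δ))) = Y δ
  rw [Set.range_comp, Nat.range_nth_of_infinite hp]
  exact Set.image_preimage_eq_of_subset (hY δ hδ)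

/-- The "even part" of a ladder. -/
def Ladder.thin (η : Ladder) : Ladder where
  dom := η.dom
  toFun := fun δ n => η.toFun δ (2 * n)
  dom_lt := η.dom_lt
  mono := fun δ h a b hab => η.mono δ h (by omega)
  lt := fun δ h n => η.lt δ h _
  cofinal := fun δ h a ha => by
    obtain ⟨n, hn⟩ := η.cofinal δ h a ha
    exact ⟨n, lt_of_lt_of_le hn ((η.mono δ h).monotone (by omega))⟩

lemma Ladder.thin_lad_subset (η : Ladder) (δ : Ordinal) :
    η.thin.lad δ ⊆ η.lad δ := by rintro x ⟨n, rfl⟩; exact ⟨2 * n, rfl⟩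

lemma Ladder.thin_diff_infinite (η : Ladder) {δ : Ordinal} (hδ : δ ∈ η.dom) :
    (η.lad δ \ η.thin.lad δ).Infinite := by
  apply Set.infinite_of_injective_forall_mem (f := fun n : ℕ => η.toFun δ (2 * n + 1))
  case hi =>
    intro a b hab
    have := (η.mono δ hδ).injective hab
    omega
  case hf =>
    intro n
    refine ⟨⟨2 * n + 1, rfl⟩, ?_⟩
    rintro ⟨m, hm⟩
    have := (η.mono δ hδ).injective hm
    omega

-- ### strongly guessing lemmas

lemma sg_of_sub {η μ : Ladder} (hdom : μ.dom ⊆ η.dom)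
    (hlad : ∀ δ ∈ μ.dom, μ.lad δ ⊆ η.lad δ) (hsg : StronglyGuessing η) :
    StronglyGuessing μ := by
  intro C hC
  obtain ⟨D, hD, hg⟩ := hsg C hC
  refine ⟨D, hD, fun δ hδ => ?_⟩
  exact Finite.subset (hg δ ⟨hδ.1, hdom hδ.2⟩)
    (fun x hx => ⟨hlad δ hδ.2 hx.1, hx.2⟩)

lemma sg_restrict {η : Ladder} (A : Set Ordinal) (hsg : StronglyGuessing η) :
    StronglyGuessing (η.restrict A) :=
  sg_of_sub (fun δ h => h.1) (fun δ _ => le_refl _) hsg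

lemma not_avoidable_of_sg {ν : Ladder} (hsg : StronglyGuessing ν)
    (hstat : Stationary ν.dom) : ¬ Avoidable ν := by
  rintro ⟨C, hC, N, hN, hav⟩
  obtain ⟨D, hD, hg⟩ := hsg C hC
  obtain ⟨δ, hδ, hδN⟩ := stat_avoid (stat_inter_club hstat hD) hN isClub_omegaOneSet
  have h1 : (ν.lad δ \ C).Finite := hg δ ⟨hδ.1.2, hδ.1.1⟩
  have h2 : (ν.lad δ ∩ C).Finite := hav δ hδ.1.1 hδN
  refine ν.lad_infinite hδ.1.1 (Finite.subset (h1.union h2) ?_)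
  intro x hx
  by_cases hxC : x ∈ C
  · exact Or.inr ⟨hx, hxC⟩
  · exact Or.inl ⟨hx, hxC⟩

/-- Central lemma: if `ψ` is strongly guessing and every ladder supported inside
`ψ.dom` that is almost disjoint from `θ` is avoidable, then `ψ` is almost everywhere
almost contained in `θ`. -/
lemma diff_ns (ψ θ : Ladder) (hsg : StronglyGuessing ψ)
    (hav : ∀ ν : Ladder, ν.dom ⊆ ψ.dom → AlmostDisjoint ν θ → Avoidable ν) :
    ¬ Stationary {δ | δ ∈ ψ.dom ∧ (δ ∉ θ.dom ∨ (ψ.lad δ \ θ.lad δ).Infinite)} := by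
  classical
  intro hstat
  set D := {δ | δ ∈ ψ.dom ∧ (δ ∉ θ.dom ∨ (ψ.lad δ \ θ.lad δ).Infinite)} with hDdef
  set Y : Ordinal → Set Ordinal :=
    fun δ => if δ ∈ θ.dom then ψ.lad δ \ θ.lad δ else ψ.lad δ with hYdef
  have hD : D ⊆ ψ.dom := fun δ h => h.1
  have hY : ∀ δ ∈ D, Y δ ⊆ ψ.lad δ := by
    intro δ _; rw [hYdef]; dsimp only; split
    · exact diff_subset
    · exact le_refl _
  have hinf : ∀ δ ∈ D, (Y δ).Infinite := by
    intro δ hδ; rw [hYdef]; dsimp only; split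
    · rename_i h
      exact hδ.2.resolve_left (not_not_intro h)
    · exact ψ.lad_infinite hδ.1
  set ν := ψ.sub D Y hD hY hinf with hν
  have hνdom : ν.dom = D := rfl
  have hAD : AlmostDisjoint ν θ := by
    refine ⟨omegaOneSet, isClub_omegaOneSet, fun δ hδ => ?_⟩
    have : ν.lad δ = Y δ := ψ.sub_lad D Y hD hY hinf hδ.2.1
    rw [this, hYdef]
    dsimp only
    rw [if_pos hδ.2.2]
    refine Finite.subset (finite_empty) ?_
    rintro x ⟨⟨_, hx2⟩, hx3⟩
    exact absurd hx3 hx2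
  have hνsg : StronglyGuessing ν := by
    refine sg_of_sub hD ?_ hsg
    intro δ hδ
    rw [ψ.sub_lad D Y hD hY hinf hδ]
    exact hY δ hδ
  exact not_avoidable_of_sg hνsg hstat (hav ν hD hAD)


-- ### cardinality plumbing

lemma ssmall_mono {S : Ordinal → Set Ordinal} {A B : Set Ordinal}
    (h : ∀ i, i < omegaTwo → Stationary (A ∩ S i) → Stationary (B ∩ S i))
    (hB : SSmall S B) : SSmall S A := by
  refine le_trans (Cardinal.mk_subtype_mono ?_) hB
  rintro i ⟨hi, hst⟩
  exact ⟨hi, h i hi hst⟩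

lemma ssmall_subset {S : Ordinal → Set Ordinal} {A B : Set Ordinal}
    (h : A ⊆ B) (hB : SSmall S B) : SSmall S A :=
  ssmall_mono (fun i _ hst => stat_mono (inter_subset_inter_left _ h) hst) hB

lemma ssmall_of_ns {S : Ordinal → Set Ordinal} {A : Set Ordinal}
    (h : ∀ i, i < omegaTwo → ¬ Stationary (A ∩ S i)) : SSmall S A := by
  haveI : IsEmpty {i : Ordinal // i < omegaTwo ∧ Stationary (A ∩ S i)} :=
    ⟨fun x => h x.1 x.2.1 x.2.2⟩
  rw [SSmall, Cardinal.mk_eq_zero]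
  exact zero_le

lemma ssmall_union {S : Ordinal → Set Ordinal} {A B : Set Ordinal}
    (hA : SSmall S A) (hB : SSmall S B) : SSmall S (A ∪ B) := by
  have key : ∀ i : Ordinal, (i < omegaTwo ∧ Stationary ((A ∪ B) ∩ S i)) →
      i ∈ {i | i < omegaTwo ∧ Stationary (A ∩ S i)} ∪ {i | i < omegaTwo ∧ Stationary (B ∩ S i)} := by
    rintro i ⟨hi, hst⟩
    rw [union_inter_distrib_right] at hst
    rcases stat_union_elim hst with h | h
    · exact Or.inl ⟨hi, h⟩
    · exact Or.inr ⟨hi, h⟩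
  have h1 : Cardinal.mk {i : Ordinal // i < omegaTwo ∧ Stationary ((A ∪ B) ∩ S i)} ≤
      Cardinal.mk (({i | i < omegaTwo ∧ Stationary (A ∩ S i)} ∪
        {i | i < omegaTwo ∧ Stationary (B ∩ S i)} : Set Ordinal)) :=
    Cardinal.mk_subtype_mono key
  refine le_trans h1 (le_trans (Cardinal.mk_union_le _ _) ?_)
  refine le_trans (add_le_add hA hB) ?_
  rw [← Cardinal.lift_add]
  rw [Cardinal.add_eq_self (Cardinal.aleph0_le_aleph 1)]

lemma omegaOne_card : omegaOne.card = Cardinal.aleph 1 := Cardinal.card_ord _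

lemma mk_Iio_omegaOne :
    Cardinal.mk (Iio omegaOne) = Cardinal.lift.{1,0} (Cardinal.aleph 1 : Cardinal.{0}) := by
  rw [Ordinal.mk_Iio_ordinal, omegaOne_card]

universe u

lemma aleph_one_lift :
    (Cardinal.aleph 1 : Cardinal.{u}) = Cardinal.lift.{u,0} (Cardinal.aleph 1 : Cardinal.{0}) := by
  rw [Cardinal.lift_aleph, Ordinal.lift_one]

/-- Enumerate, by countable ordinals, the indices on which `X` is stationary. -/
lemma exists_enum (S : Ordinal.{0} → Set Ordinal.{u}) (X : Set Ordinal.{u})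
    (hsm : SSmall S X)
    (i₀ : Ordinal.{0}) (h₀ : i₀ < omegaTwo ∧ Stationary (X ∩ S i₀)) :
    ∃ E : Ordinal.{u} → Ordinal.{0},
      (∀ α, E α < omegaTwo ∧ Stationary (X ∩ S (E α))) ∧
      ∀ i, i < omegaTwo → Stationary (X ∩ S i) →
        ∃ α : Ordinal.{u}, α < omegaOne ∧ E α = i := by
  classical
  haveI hne : Nonempty {i : Ordinal.{0} // i < omegaTwo ∧ Stationary (X ∩ S i)} := ⟨⟨i₀, h₀⟩⟩
  have h2 : Cardinal.lift.{u+1,1}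
        (Cardinal.mk {i : Ordinal.{0} // i < omegaTwo ∧ Stationary (X ∩ S i)}) ≤
      Cardinal.lift.{1,u+1} (Cardinal.mk (Iio (omegaOne : Ordinal.{u}))) := by
    have e1 : Cardinal.lift.{1,u+1} (Cardinal.mk (Iio (omegaOne : Ordinal.{u}))) =
        Cardinal.lift.{u+1,0} (Cardinal.aleph 1 : Cardinal.{0}) := by
      rw [Ordinal.mk_Iio_ordinal, omegaOne_card, aleph_one_lift,
        Cardinal.lift_lift, Cardinal.lift_lift]
    rw [e1]
    refine le_trans (Cardinal.lift_le.mpr hsm) ?_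
    rw [Cardinal.lift_lift]
  obtain ⟨f⟩ := Cardinal.lift_mk_le'.mp h2
  have hesurj : Function.Surjective (Function.invFun f) :=
    Function.invFun_surjective f.injective
  refine ⟨fun α => if h : α < omegaOne then (Function.invFun f ⟨α, h⟩).1
    else (Function.invFun f ⟨(0 : Ordinal.{u}), omegaOne_pos⟩).1, ?_, ?_⟩
  · intro α
    by_cases h : α < omegaOne
    · dsimp only; rw [dif_pos h]; exact (Function.invFun f ⟨α, h⟩).2
    · dsimp only; rw [dif_neg h]; exact (Function.invFun f ⟨(0 : Ordinal.{u}), omegaOne_pos⟩).2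
  · intro i hi hst
    obtain ⟨x, hx⟩ := hesurj ⟨i, hi, hst⟩
    refine ⟨x.1, x.2, ?_⟩
    dsimp only
    rw [dif_pos (show (x : Ordinal.{u}) < omegaOne from x.2)]
    have : (⟨x.1, show (x : Ordinal.{u}) < omegaOne from x.2⟩ : Iio omegaOne) = x := rfl
    rw [this, hx]


-- ### the empty ladder

def emptyLadder : Ladder where
  dom := ∅
  toFun := fun _ _ => 0
  dom_lt := fun δ h => absurd h (notMem_empty δ)
  mono := fun δ h => absurd h (notMem_empty δ)
  lt := fun δ h => absurd h (notMem_empty δ)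
  cofinal := fun δ h => absurd h (notMem_empty δ)

lemma ns_empty : ¬ Stationary (∅ : Set Ordinal) :=
  not_stationary_iff.mpr ⟨omegaOneSet, isClub_omegaOneSet, empty_inter _⟩

/-- Direction 1: every `S̄`-small subset of `ω₁` carries a maximal ladder. -/
lemma exists_maximal_of_small (S : Ordinal.{0} → Set Ordinal.{0}) (η₁ : Ladder)
    (χ : Ordinal.{0} → Ladder) (hA : CondA S η₁ χ)
    (X : Set Ordinal.{0}) (hX : X ⊆ omegaOneSet) (hsm : SSmall S X) :
    ∃ η : Ladder, LadderMaximalFor η X := by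
  classical
  obtain ⟨hS, hSdis, hA1, hA2, hA3, hA4, hA5⟩ := hA
  by_cases hW : ∃ i₀, i₀ < omegaTwo ∧ Stationary (X ∩ S i₀)
  swap
  · -- no stationary trace at all: the empty ladder is maximal
    push_neg at hW
    refine ⟨emptyLadder, fun δ h => absurd h (notMem_empty δ), ?_, ?_⟩
    · exact fun C hC => ⟨omegaOneSet, isClub_omegaOneSet,
        fun δ hδ => absurd hδ.2 (notMem_empty δ)⟩
    · intro μ hμ _
      exact hA4 X hX hW μ hμ
  obtain ⟨i₀, h₀⟩ := hW
  obtain ⟨E, hE1, hE2⟩ := exists_enum S X hsm i₀ h₀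
  set Dstar : Set Ordinal.{0} := {δ | δ < omegaOne ∧ ∃ α < δ, δ ∈ S (E α) ∩ X} with hDstarDef
  set A : Ordinal.{0} → Ordinal.{0} :=
    fun δ => sInf {α | α < δ ∧ δ ∈ S (E α) ∩ X} with hAdef
  have hA_spec : ∀ δ ∈ Dstar, A δ < δ ∧ δ ∈ S (E (A δ)) ∩ X := by
    intro δ hδ
    have hne : {α | α < δ ∧ δ ∈ S (E α) ∩ X}.Nonempty := by
      obtain ⟨α, hα1, hα2⟩ := hδ.2
      exact ⟨α, hα1, hα2⟩
    exact csInf_mem hne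
  have hdomχ : ∀ δ ∈ Dstar, δ ∈ (χ (E (A δ))).dom := by
    intro δ hδ
    rw [(hA3 (E (A δ)) (hE1 (A δ)).1).1]
    exact (hA_spec δ hδ).2.1
  obtain ⟨ηs, hηdom, hηfun⟩ : ∃ ηs : Ladder, ηs.dom = Dstar ∧
      ∀ δ, ηs.lad δ = (χ (E (A δ))).lad δ := by
    refine ⟨⟨Dstar, fun δ => (χ (E (A δ))).toFun δ, ?_, ?_, ?_, ?_⟩, rfl, fun _ => rfl⟩
    · exact fun δ hδ => hδ.1
    · exact fun δ hδ => (χ (E (A δ))).mono δ (hdomχ δ hδ)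
    · exact fun δ hδ => (χ (E (A δ))).lt δ (hdomχ δ hδ)
    · exact fun δ hδ => (χ (E (A δ))).cofinal δ (hdomχ δ hδ)
  refine ⟨ηs, ?_, ?_, ?_⟩
  · -- dom ⊆ X
    rw [hηdom]
    exact fun δ hδ => (hA_spec δ hδ).2.2
  · -- strongly guessing
    intro C hC
    have hsgχ : ∀ α : Ordinal.{0}, ∃ D, IsClubOmegaOne D ∧
        ∀ δ ∈ D ∩ (χ (E α)).dom, AlmostSubset ((χ (E α)).lad δ) C :=
      fun α => (hA3 (E α) (hE1 α).1).2.2.1 C hC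
    choose D hD hDg using hsgχ
    refine ⟨diagInter D, isClub_diagInter D hD, ?_⟩
    intro δ hδ
    have hδdom : δ ∈ Dstar := by rw [← hηdom]; exact hδ.2
    have hspec := hA_spec δ hδdom
    rw [hηfun δ]
    exact hDg (A δ) δ ⟨hδ.1.2 (A δ) hspec.1, hdomχ δ hδdom⟩
  · -- maximality
    intro μ hμX hADμ
    obtain ⟨Cad, hCadclub, hADfin⟩ := hADμ
    -- the part of X outside Dstar is avoidable
    set X' : Set Ordinal.{0} := X \ Dstar with hX'def
    have hX'ns : ∀ i, i < omegaTwo → ¬ Stationary (X' ∩ S i) := by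
      intro i hi
      by_cases hst : Stationary (X ∩ S i)
      · obtain ⟨α₀, hα₀ω, hα₀E⟩ := hE2 i hi hst
        refine ns_bounded hα₀ω (fun δ hδ => ?_)
        by_contra hgt
        push_neg at hgt
        have hmem : δ ∈ S (E α₀) ∩ X := by rw [hα₀E]; exact ⟨hδ.2, hδ.1.1⟩
        exact hδ.1.2 (⟨hX hδ.1.1, α₀, hgt, hmem⟩ :
          δ ∈ {δ | δ < omegaOne ∧ ∃ α < δ, δ ∈ S (E α) ∩ X})
      · exact ns_mono (show X' ∩ S i ⊆ X ∩ S i from fun δ hδ => ⟨hδ.1.1, hδ.2⟩) hst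
    have hAvX' : AvoidableSet X' := hA4 X' (fun δ hδ => hX hδ.1) hX'ns
    obtain ⟨C1, hC1club, N1, hN1, hav1⟩ := hAvX' (μ.restrict X') (fun δ hδ => hδ.2)
    -- the club avoiding double-membership
    have hGex : ∀ β γ : Ordinal.{0}, ∃ G, IsClubOmegaOne G ∧
        (E β ≠ E γ → ∀ δ ∈ G, δ ∉ S (E β) ∩ S (E γ) ∩ X) := by
      intro β γ
      by_cases h : E β = E γ
      · exact ⟨omegaOneSet, isClub_omegaOneSet, fun hne => absurd h hne⟩
      · have hns : ¬ Stationary (S (E β) ∩ S (E γ) ∩ X) :=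
          ns_mono (fun δ hδ => hδ.1)
            (hSdis (E β) (hE1 β).1 (E γ) (hE1 γ).1 h)
        obtain ⟨G, hG, hGdisj⟩ := not_stationary_iff.mp hns
        exact ⟨G, hG, fun _ δ hδG hmem =>
          (eq_empty_iff_forall_notMem.mp hGdisj δ) ⟨hmem, hδG⟩⟩
    choose G hGclub hGprop using hGex
    set Mclub := diagInter (fun β => diagInter (fun γ => G β γ)) with hMdef
    have hMclub : IsClubOmegaOne Mclub :=
      isClub_diagInter _ (fun β => isClub_diagInter _ (fun γ => hGclub β γ))
    have hMkey : ∀ δ ∈ Mclub, ∀ β γ, β < δ → γ < δ →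
        δ ∈ S (E β) ∩ X → δ ∈ S (E γ) ∩ X → E β = E γ := by
      intro δ hδ β γ hβ hγ h1 h2
      by_contra hne
      exact hGprop β γ hne δ ((hδ.2 β hβ).2 γ hγ) ⟨⟨h1.1, h2.1⟩, h1.2⟩
    -- per-index avoiding clubs
    have havα : ∀ α : Ordinal.{0}, ∃ C N, IsClubOmegaOne C ∧ ¬ Stationary N ∧
        (α < omegaOne → ∀ δ ∈ μ.dom ∩ S (E α), δ ∉ N → (μ.lad δ ∩ C).Finite) := by
      intro α
      by_cases hαω : α < omegaOne
      swap
      · exact ⟨omegaOneSet, ∅, isClub_omegaOneSet, ns_empty, fun h => absurd h hαω⟩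
      have hadα : AlmostDisjoint (μ.restrict (S (E α))) (χ (E α)) := by
        refine ⟨Cad ∩ (Mclub ∩ {x | α < x ∧ x < omegaOne}),
          isClub_inter hCadclub (isClub_inter hMclub (isClub_above hαω)), ?_⟩
        rintro δ ⟨⟨hδCad, hδM, hδα, hδω⟩, ⟨hδμ, hδS⟩, _⟩
        have hδX : δ ∈ X := hμX hδμ
        have hδDstar : δ ∈ Dstar := ⟨hδω, α, hδα, hδS, hδX⟩
        have hspec := hA_spec δ hδDstar
        have h2 := hADfin δ ⟨hδCad, hδμ, by rw [hηdom]; exact hδDstar⟩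
        have hEA : E (A δ) = E α :=
          hMkey δ hδM (A δ) α hspec.1 hδα ⟨hspec.2.1, hspec.2.2⟩ ⟨hδS, hδX⟩
        rw [hηfun δ, hEA] at h2
        exact h2
      have := (hA3 (E α) (hE1 α).1).2.2.2 (μ.restrict (S (E α)))
        (fun δ hδ => hδ.2) hadα
      obtain ⟨C, hCclub, N, hN, hav⟩ := this
      exact ⟨C, N, hCclub, hN, fun _ δ hδ hδN => hav δ hδ hδN⟩
    choose Cα Nα hCα hNα havCα using havα
    refine ⟨C1 ∩ diagInter Cα,
      isClub_inter hC1club (isClub_diagInter Cα hCα),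
      N1 ∪ {δ | ∃ β < δ, δ ∈ Nα β}, ns_union hN1 (ns_diagUnion hNα), ?_⟩
    intro δ hδdom hδN
    rw [mem_union] at hδN
    push_neg at hδN
    obtain ⟨hδN1, hδN2⟩ := hδN
    by_cases hδD : δ ∈ Dstar
    · have hspec := hA_spec δ hδD
      have hfin := havCα (A δ) (lt_trans hspec.1 hδD.1) δ ⟨hδdom, hspec.2.1⟩
        (fun h => hδN2 ⟨A δ, hspec.1, h⟩)
      refine Finite.subset ((μ.finite_below hδdom hspec.1).union hfin) ?_
      rintro x ⟨hxμ, _, hxdiag⟩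
      by_cases hxA : x ≤ A δ
      · exact Or.inl ⟨hxμ, hxA⟩
      · exact Or.inr ⟨hxμ, hxdiag.2 (A δ) (not_le.mp hxA)⟩
    · have := hav1 δ ⟨hδdom, hμX hδdom, hδD⟩ hδN1
      exact Finite.subset this (fun x hx => ⟨hx.1, hx.2.1⟩)


/-- Direction 2: a set carrying a maximal ladder is `S̄`-small. -/
lemma small_of_maximal (S : Ordinal.{0} → Set Ordinal.{0}) (η₁ : Ladder)
    (χ : Ordinal.{0} → Ladder) (hA : CondA S η₁ χ)
    (X : Set Ordinal.{0}) (hX : X ⊆ omegaOneSet)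
    (η : Ladder) (hmax : LadderMaximalFor η X) : SSmall S X := by
  classical
  by_contra hns
  obtain ⟨hdomX, hsg, hmx⟩ := hmax
  obtain ⟨hS, hSdis, hA1, hA2, hA3, hA4, hA5⟩ := hA
  -- Step 1: wherever X ∩ S i is stationary, so is X ∩ S i ∩ η.dom.
  have hstep1 : ∀ i, i < omegaTwo → Stationary (X ∩ S i) →
      Stationary ((X ∩ S i) ∩ η.dom) := by
    intro i hi hst
    by_contra hnsA
    -- then χ i restricted to X would be avoidable, contradicting strong guessing
    have hχdom : (χ i).dom = S i := (hA3 i hi).1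
    have hμ1 : Avoidable ((χ i).restrict (X \ η.dom)) := by
      refine hmx _ (fun δ hδ => hδ.2.1) ⟨omegaOneSet, isClub_omegaOneSet, ?_⟩
      rintro δ ⟨_, ⟨_, _, hδnd⟩, hδd⟩
      exact absurd hδd hδnd
    obtain ⟨C1, hC1club, N1, hN1, hav1⟩ := hμ1
    have hsgχX : StronglyGuessing ((χ i).restrict X) :=
      sg_restrict X (hA3 i hi).2.2.1
    have hstatχX : Stationary ((χ i).restrict X).dom := by
      have : (χ i).restrict X = (χ i).restrict X := rfl
      show Stationary ((χ i).dom ∩ X)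
      rw [hχdom]
      exact stat_mono (fun δ hδ => ⟨hδ.2, hδ.1⟩) hst
    refine not_avoidable_of_sg hsgχX hstatχX ⟨C1, hC1club, N1 ∪ ((X ∩ S i) ∩ η.dom),
      ns_union hN1 hnsA, ?_⟩
    rintro δ ⟨hδχ, hδX⟩ hδN
    rw [mem_union] at hδN
    push_neg at hδN
    have hδS : δ ∈ S i := by rw [← hχdom]; exact hδχ
    have hδnd : δ ∉ η.dom := fun hd => hδN.2 ⟨⟨hδX, hδS⟩, hd⟩
    exact hav1 δ ⟨hδχ, hδX, hδnd⟩ hδN.1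
  -- Step 2: η is almost a subladder of η₁.
  have hD0 := diff_ns η η₁ hsg (fun ν _ h => hA2 ν h)
  obtain ⟨E, hEclub, hEdisj⟩ := not_stationary_iff.mp hD0
  have hEkey : ∀ δ ∈ E, δ ∈ η.dom → δ ∈ η₁.dom ∧ (η.lad δ \ η₁.lad δ).Finite := by
    intro δ hδE hδd
    by_contra hcon
    rw [not_and_or] at hcon
    have hδD0 : δ ∈ {δ | δ ∈ η.dom ∧ (δ ∉ η₁.dom ∨ (η.lad δ \ η₁.lad δ).Infinite)} := by
      refine ⟨hδd, ?_⟩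
      rcases hcon with h | h
      · exact Or.inl h
      · exact Or.inr h
    exact (eq_empty_iff_forall_notMem.mp hEdisj δ) ⟨hδD0, hδE⟩
  -- Step 3: define X* and the thinned ladder ρ.
  set ρ := (η.thin).restrict E with hρdef
  have hρdom : ρ.dom = η.dom ∩ E := rfl
  have hρsub : Subladder ρ η₁ := by
    refine ⟨E, hEclub, ?_, ?_⟩
    · rintro δ ⟨hδE, hδd, _⟩
      exact (hEkey δ hδE hδd).1
    · rintro δ ⟨hδE, hδd, _⟩
      refine Finite.subset (hEkey δ hδE hδd).2 ?_
      intro x hx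
      exact ⟨η.thin_lad_subset δ hx.1, hx.2⟩
  -- X* is not small
  have hnsStar : ¬ SSmall S (η.dom ∩ E) := by
    intro hsm
    refine hns (ssmall_mono ?_ hsm)
    intro i hi hst
    have h1 : Stationary (((X ∩ S i) ∩ η.dom) ∩ E) :=
      stat_inter_club (hstep1 i hi hst) hEclub
    exact stat_mono (fun δ hδ => ⟨⟨hδ.1.2, hδ.2⟩, hδ.1.1.2⟩) h1
  -- A5 applies
  obtain ⟨j, hj, hSj, hsubj⟩ := hA5 (η.dom ∩ E)
    (fun δ hδ => η.dom_lt δ hδ.1) hnsStar ρ rfl hρsub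
  obtain ⟨C0, hC0club, _, hC0g⟩ := hsubj
  have hSjdom : S j ⊆ η.dom := fun δ h => (hSj h).1
  -- Step 4: the part of η over S j not almost-inside χ j is nonstationary
  have hD1 := diff_ns (η.restrict (S j)) (χ j) (sg_restrict _ hsg)
    (fun ν hν had => (hA3 j hj).2.2.2 ν (fun δ hδ => (hν hδ).2) had)
  obtain ⟨E1, hE1club, hE1disj⟩ := not_stationary_iff.mp hD1
  -- Step 5: pick a point and contradict
  obtain ⟨δ, hδ⟩ := (hS j hj).2 (C0 ∩ E1) (isClub_inter hC0club hE1club)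
  have hδS : δ ∈ S j := hδ.1
  have hδdomη : δ ∈ η.dom := hSjdom hδS
  have hδdomχ : δ ∈ (χ j).dom := by rw [(hA3 j hj).1]; exact hδS
  have h1 : ((χ j).lad δ \ ρ.lad δ).Finite := hC0g δ ⟨hδ.2.1, hδdomχ⟩
  have h2 : (η.lad δ \ (χ j).lad δ).Finite := by
    by_contra hinf
    have hδD1 : δ ∈ {x | x ∈ (η.restrict (S j)).dom ∧
        (x ∉ (χ j).dom ∨ ((η.restrict (S j)).lad x \ (χ j).lad x).Infinite)} := by
      refine ⟨⟨hδdomη, hδS⟩, Or.inr ?_⟩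
      rw [η.restrict_lad]
      exact hinf
    exact (eq_empty_iff_forall_notMem.mp hE1disj δ) ⟨hδD1, hδ.2.2⟩
  have h3 : (η.lad δ \ ρ.lad δ).Finite := by
    refine Finite.subset (h2.union h1) ?_
    intro x hx
    by_cases hxχ : x ∈ (χ j).lad δ
    · exact Or.inr ⟨hxχ, hx.2⟩
    · exact Or.inl ⟨hx.1, hxχ⟩
  have : ρ.lad δ = η.thin.lad δ := rfl
  rw [this] at h3
  exact η.thin_diff_infinite hδdomη h3


/-- One-sided: the part of `η₁.dom` missing from `η₂.dom` has nonstationary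
intersection with every `S i`. -/
lemma dom_diff_ns (S : Ordinal.{0} → Set Ordinal.{0}) (η₁ : Ladder)
    (χ₁ : Ordinal.{0} → Ladder) (hA : CondA S η₁ χ₁)
    (η₂ : Ladder) (hA2' : ∀ μ : Ladder, AlmostDisjoint μ η₂ → Avoidable μ) :
    ∀ i, i < omegaTwo → ¬ Stationary ((η₁.dom \ η₂.dom) ∩ S i) := by
  intro i hi
  obtain ⟨hS, hSdis, hA1, hA2, hA3, hA4, hA5⟩ := hA
  have hD := diff_ns (χ₁ i) η₂ (hA3 i hi).2.2.1 (fun ν _ h => hA2' ν h)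
  refine ns_mono ?_ hD
  rintro δ ⟨⟨_, hδn2⟩, hδS⟩
  exact ⟨by rw [(hA3 i hi).1]; exact hδS, Or.inl hδn2⟩

/-- The set where `η₁` has infinite surplus over `η₂` is `S̄`-small. -/
lemma surplus_small (S : Ordinal.{0} → Set Ordinal.{0}) (η₁ : Ladder)
    (χ₁ : Ordinal.{0} → Ladder) (hA : CondA S η₁ χ₁)
    (η₂ : Ladder) (hA2' : ∀ μ : Ladder, AlmostDisjoint μ η₂ → Avoidable μ) :
    SSmall S {δ | δ ∈ η₁.dom ∩ η₂.dom ∧ (η₁.lad δ \ η₂.lad δ).Infinite} := by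
  classical
  by_contra hns
  obtain ⟨hS, hSdis, hA1, hA2, hA3, hA4, hA5⟩ := hA
  set P : Set Ordinal.{0} :=
    {δ | δ ∈ η₁.dom ∩ η₂.dom ∧ (η₁.lad δ \ η₂.lad δ).Infinite} with hPdef
  have hD : P ⊆ η₁.dom := fun δ hδ => hδ.1.1
  have hY : ∀ δ ∈ P, η₁.lad δ \ η₂.lad δ ⊆ η₁.lad δ := fun δ _ => diff_subset
  have hinf : ∀ δ ∈ P, (η₁.lad δ \ η₂.lad δ).Infinite := fun δ hδ => hδ.2
  set ρ := η₁.sub P _ hD hY hinf with hρdef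
  have hρsub : Subladder ρ η₁ := by
    refine ⟨omegaOneSet, isClub_omegaOneSet, fun δ hδ => hδ.2.1.1, ?_⟩
    rintro δ ⟨_, hδP⟩
    rw [AlmostSubset, η₁.sub_lad P _ hD hY hinf hδP]
    refine Finite.subset finite_empty ?_
    rintro x ⟨⟨hx1, _⟩, hx3⟩
    exact absurd hx1 hx3
  obtain ⟨i₀, hi₀, hPsub, C0, hC0club, _, hC0g⟩ :=
    hA5 P (fun δ hδ => η₁.dom_lt δ hδ.1.1) hns ρ rfl hρsub
  have had : AlmostDisjoint (χ₁ i₀) η₂ := by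
    refine ⟨C0, hC0club, ?_⟩
    rintro δ ⟨hδC0, hδχ, hδ2⟩
    have hδS : δ ∈ S i₀ := by rw [← (hA3 i₀ hi₀).1]; exact hδχ
    have hδP : δ ∈ P := hPsub hδS
    have hg := hC0g δ ⟨hδC0, hδχ⟩
    rw [AlmostSubset, η₁.sub_lad P _ hD hY hinf hδP] at hg
    refine Finite.subset hg ?_
    rintro x ⟨hx1, hx2⟩
    refine ⟨hx1, fun hx3 => hx3.2 hx2⟩
  refine not_avoidable_of_sg (hA3 i₀ hi₀).2.2.1 ?_ (hA2' _ had)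
  rw [(hA3 i₀ hi₀).1]
  exact (hS i₀ hi₀).2


/-- Lemma 2.3: if A1–A5 hold for (S̄, η̄¹) and (T̄, η̄²), then
I(S̄) = I(T̄) = I₁, and the set where η̄¹ and η̄² essentially differ is in I₁. -/
theorem stmt16 (S T : Ordinal → Set Ordinal) (η₁ η₂ : Ladder)
    (χ₁ χ₂ : Ordinal → Ladder) (h1 : CondA S η₁ χ₁) (h2 : CondA T η₂ χ₂) :
    (∀ X : Set Ordinal, X ⊆ omegaOneSet →
        ((SSmall S X ↔ ∃ η : Ladder, LadderMaximalFor η X) ∧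
         (SSmall T X ↔ ∃ η : Ladder, LadderMaximalFor η X))) ∧
    (∃ η : Ladder, LadderMaximalFor η
        ((η₁.dom \ η₂.dom) ∪ (η₂.dom \ η₁.dom) ∪
          {δ ∈ η₁.dom ∩ η₂.dom | ¬ AlmostEq (η₁.lad δ) (η₂.lad δ)})) := by
  have parta : ∀ X : Set Ordinal, X ⊆ omegaOneSet →
      ((SSmall S X ↔ ∃ η : Ladder, LadderMaximalFor η X) ∧
       (SSmall T X ↔ ∃ η : Ladder, LadderMaximalFor η X)) := by
    intro X hX
    constructor
    · constructor
      · exact fun h => exists_maximal_of_small S η₁ χ₁ h1 X hX h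
      · rintro ⟨η, hη⟩
        exact small_of_maximal S η₁ χ₁ h1 X hX η hη
    · constructor
      · exact fun h => exists_maximal_of_small T η₂ χ₂ h2 X hX h
      · rintro ⟨η, hη⟩
        exact small_of_maximal T η₂ χ₂ h2 X hX η hη
  refine ⟨parta, ?_⟩
  -- transfer T-smallness to S-smallness
  have transfer : ∀ Z : Set Ordinal, Z ⊆ omegaOneSet → SSmall T Z → SSmall S Z := by
    intro Z hZ hT
    exact ((parta Z hZ).1).mpr (((parta Z hZ).2).mp hT)
  have hA2S : ∀ μ : Ladder, AlmostDisjoint μ η₁ → Avoidable μ := h1.2.2.2.1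
  have hA2T : ∀ μ : Ladder, AlmostDisjoint μ η₂ → Avoidable μ := h2.2.2.2.1
  -- the four pieces
  have s1 : SSmall S (η₁.dom \ η₂.dom) :=
    ssmall_of_ns (dom_diff_ns S η₁ χ₁ h1 η₂ hA2T)
  have s2 : SSmall S (η₂.dom \ η₁.dom) := by
    refine transfer _ (fun δ hδ => η₂.dom_lt δ hδ.1) ?_
    exact ssmall_of_ns (dom_diff_ns T η₂ χ₂ h2 η₁ hA2S)
  have s3 : SSmall S {δ | δ ∈ η₁.dom ∩ η₂.dom ∧ (η₁.lad δ \ η₂.lad δ).Infinite} :=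
    surplus_small S η₁ χ₁ h1 η₂ hA2T
  have s4 : SSmall S {δ | δ ∈ η₂.dom ∩ η₁.dom ∧ (η₂.lad δ \ η₁.lad δ).Infinite} := by
    refine transfer _ (fun δ hδ => η₂.dom_lt δ hδ.1.1) ?_
    exact surplus_small T η₂ χ₂ h2 η₁ hA2S
  have s5 : SSmall S {δ | δ ∈ η₁.dom ∩ η₂.dom ∧ ¬ AlmostEq (η₁.lad δ) (η₂.lad δ)} := by
    refine ssmall_subset ?_ (ssmall_union s3 s4)
    rintro δ ⟨hδd, hδne⟩
    rw [AlmostEq, not_and_or] at hδne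
    rcases hδne with h | h
    · exact Or.inl ⟨hδd, h⟩
    · exact Or.inr ⟨⟨hδd.2, hδd.1⟩, h⟩
  have hsmall : SSmall S ((η₁.dom \ η₂.dom) ∪ (η₂.dom \ η₁.dom) ∪
      {δ | δ ∈ η₁.dom ∩ η₂.dom ∧ ¬ AlmostEq (η₁.lad δ) (η₂.lad δ)}) :=
    ssmall_union (ssmall_union s1 s2) s5
  refine exists_maximal_of_small S η₁ χ₁ h1 _ ?_ hsmall
  rintro δ ((⟨h, _⟩ | ⟨h, _⟩) | ⟨⟨h, _⟩, _⟩)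
  · exact η₁.dom_lt δ h
  · exact η₂.dom_lt δ h
  · exact η₁.dom_lt δ h
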